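/- arXiv:1802.01831 — 3 statements merged into one kernel-verified Lean document; each statement's English description precedes it below -/
import Mathlib

section
/- For every real number s > 1, one has 1/(s−1) + ((s−1)/s)·(1/√(2π)) ≤ ζ(s). -/
/-!
Comparing the series with the integral of the decreasing function `x ↦ x ^ (-s)` over `(2, ∞)`
gives `ζ(s) ≥ 1 + 2 ^ (1 - s) / (s - 1)`. What remains is elementary: for `s ≤ 3` the deficit
`1 - 2 ^ (1 - s)` is at most `(s - 1) log 2` and `log 2 + (2/3)(2/5) < 1`; for `s > 3` already
`1/2 + 2/5 < 1`. Both use `√(2π) ≥ 5/2`.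
-/

open Real

theorem one_sub_rpow_neg_le_mul_log {a : ℝ} (ha : 0 < a) (t : ℝ) :
    1 - a ^ (-t) ≤ t * log a := by
  simpa [rpow_neg ha.le, log_rpow ha] using one_sub_inv_le_log_of_pos (rpow_pos_of_pos ha t)

theorem five_halves_le_sqrt_two_mul_pi : (5 / 2 : ℝ) ≤ √(2 * π) :=
  le_sqrt_of_sq_le (by linarith [pi_gt_d2])

open Set in
theorem one_add_two_rpow_div_le_tsum_rpow_neg {s : ℝ} (hs : 1 < s) :
    1 + 2 ^ (1 - s) / (s - 1) ≤ ∑' n : ℕ, (n : ℝ) ^ (-s) := by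
  have hsum : Summable fun n : ℕ => (n : ℝ) ^ (-s) := summable_nat_rpow.mpr (by linarith)
  have hanti : AntitoneOn (fun x : ℝ => x ^ (-s)) (Ici ((2 : ℕ) : ℝ)) := fun x hx y _ hxy =>
    rpow_le_rpow_of_nonpos (by simp at hx; linarith) hxy (by linarith)
  have hhead : ∑ n ∈ Finset.range 2, (n : ℝ) ^ (-s) = 1 := by
    simp [Finset.sum_range_succ, zero_rpow (by linarith : -s ≠ 0)]
  have hint : ∫ x in Ioi ((2 : ℕ) : ℝ), x ^ (-s) = 2 ^ (1 - s) / (s - 1) := by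
    rw [Nat.cast_ofNat, integral_Ioi_rpow_of_lt (by linarith) two_pos, ← neg_div_neg_eq]
    ring_nf
  calc 1 + 2 ^ (1 - s) / (s - 1)
      = ∑ n ∈ Finset.range 2, (n : ℝ) ^ (-s) + ∫ x in Ioi ((2 : ℕ) : ℝ), x ^ (-s) := by
        rw [hhead, hint]
    _ ≤ ∑ n ∈ Finset.range 2, (n : ℝ) ^ (-s) + ∑' n : ℕ, ((n + 2 : ℕ) : ℝ) ^ (-s) := by
        gcongr
        exact hanti.integral_le_tsum_comp_add 2 hsum fun x hx => by simp at hx; positivity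
    _ = ∑' n : ℕ, (n : ℝ) ^ (-s) := hsum.sum_add_tsum_nat_add 2

theorem one_div_sub_one_add_le_one_add_two_rpow_div {s : ℝ} (hs : 1 < s) :
    1 / (s - 1) + (s - 1) / s * (1 / √(2 * π)) ≤ 1 + 2 ^ (1 - s) / (s - 1) := by
  have hs₀ : 0 < s - 1 := by linarith
  have hc : 1 / √(2 * π) ≤ 2 / 5 := by
    simpa using one_div_le_one_div_of_le (by norm_num) five_halves_le_sqrt_two_mul_pi
  rcases le_or_gt s 3 with hs3 | hs3
  · have hlog : (1 - 2 ^ (1 - s)) / (s - 1) ≤ log 2 := by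
      rw [div_le_iff₀ hs₀, mul_comm]
      simpa using one_sub_rpow_neg_le_mul_log two_pos (s - 1)
    have hfrac : (s - 1) / s ≤ 2 / 3 := by rw [div_le_iff₀ (by linarith)]; linarith
    have := mul_le_mul hfrac hc (by positivity) (by norm_num)
    have hsplit : 1 / (s - 1) = (1 - 2 ^ (1 - s)) / (s - 1) + 2 ^ (1 - s) / (s - 1) := by ring
    linarith [log_two_lt_d9]
  · have hinv : 1 / (s - 1) ≤ 1 / 2 := one_div_le_one_div_of_le two_pos (by linarith)
    have hfrac : (s - 1) / s ≤ 1 := div_le_one_of_le₀ (by linarith) (by linarith)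
    have := mul_le_mul hfrac hc (by positivity) zero_le_one
    have : 0 ≤ 2 ^ (1 - s) / (s - 1) := by positivity
    linarith

theorem riemannZeta_ofReal_re {s : ℝ} (hs : 1 < s) :
    (riemannZeta s).re = ∑' n : ℕ, (n : ℝ) ^ (-s) := by
  rw [zeta_eq_tsum_one_div_nat_cpow (by simpa using hs)]
  have hterm (n : ℕ) : 1 / (n : ℂ) ^ (s : ℂ) = (((n : ℝ) ^ (-s) : ℝ) : ℂ) := by
    rw [rpow_neg n.cast_nonneg, Complex.ofReal_inv, Complex.ofReal_cpow n.cast_nonneg,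
      one_div, Complex.ofReal_natCast]
  simp_rw [hterm, ← Complex.ofReal_tsum, Complex.ofReal_re]

/-- For every real number `s > 1`, one has
`1/(s-1) + ((s-1)/s) * (1/√(2π)) ≤ ζ(s)`. -/
theorem zeta_lower_bound (s : ℝ) (hs : 1 < s) :
    1 / (s - 1) + ((s - 1) / s) * (1 / Real.sqrt (2 * π)) ≤ (riemannZeta (s : ℂ)).re :=
  calc 1 / (s - 1) + ((s - 1) / s) * (1 / Real.sqrt (2 * π))
      ≤ 1 + 2 ^ (1 - s) / (s - 1) := one_div_sub_one_add_le_one_add_two_rpow_div hs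
    _ ≤ ∑' n : ℕ, (n : ℝ) ^ (-s) := one_add_two_rpow_div_le_tsum_rpow_neg hs
    _ = (riemannZeta (s : ℂ)).re := (riemannZeta_ofReal_re hs).symm
end

section
/- The function g is strictly decreasing on (3, ∞); there exists a unique s₂ > 0 with f(s₂) = g(s₂), and for every x > s₂ one has g(x) ≤ f(x). -/
/-!
On `[0, 3]` the cubic `g` stays above `1/2` while `f < 1/√(2π) < 1/2`, so every positive crossing
lies in `(3, ∞)`. There `f` increases and `g` decreases, so `f - g` is strictly increasing and
crosses zero at most once; it does cross, between `3` and `7`, by the intermediate value theorem.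
-/

open Real Set

namespace GaussianCubicCrossing

noncomputable def f (x : ℝ) : ℝ := 1 / √(2 * π) * (x / (x + 1))

noncomputable def g (x : ℝ) : ℝ := 1 / 720 * (414 + 49 * x - 6 * x ^ 2 - x ^ 3)

lemma two_lt_sqrt_two_pi : 2 < √(2 * π) := by
  rw [lt_sqrt zero_le_two]
  linarith [pi_gt_three]

lemma sqrt_two_pi_lt_three : √(2 * π) < 3 := by
  rw [sqrt_lt' three_pos]
  linarith [pi_lt_four]

lemma strictMonoOn_div_add_one : StrictMonoOn (fun x : ℝ => x / (x + 1)) (Ioi (-1)) := by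
  intro x hx y hy hxy
  simp only [mem_Ioi] at hx hy
  rw [div_lt_div_iff₀ (by linarith) (by linarith)]
  linarith

lemma f_strictMonoOn : StrictMonoOn f (Ioi (-1)) := fun _ hx _ hy hxy =>
  mul_lt_mul_of_pos_left (strictMonoOn_div_add_one hx hy hxy)
    (one_div_pos.2 (zero_lt_two.trans two_lt_sqrt_two_pi))

lemma continuousOn_f : ContinuousOn f (Ioi (-1)) := by
  unfold f
  refine continuousOn_const.mul (continuousOn_id.div (by fun_prop) fun x hx => ?_)
  exact ne_of_gt (neg_lt_iff_pos_add.1 hx)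

lemma g_strictAntiOn : StrictAntiOn g (Ioi 3) := by
  intro x hx y hy hxy
  simp only [mem_Ioi] at hx hy
  -- `g y - g x = (y - x) (49 - 6 (x + y) - (x² + x y + y²)) / 720`, and the last factor is `< -14`
  have : 0 < (y - x) * (6 * (x + y) + (x ^ 2 + x * y + y ^ 2) - 49) := by
    apply mul_pos (sub_pos.2 hxy)
    nlinarith
  unfold g
  nlinarith

lemma f_lt_half {x : ℝ} (hx : 0 ≤ x) : f x < 1 / 2 := by
  have hfrac : x / (x + 1) < 1 := (div_lt_one (by linarith)).2 (by linarith)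
  calc f x < 1 / √(2 * π) * 1 :=
        mul_lt_mul_of_pos_left hfrac (one_div_pos.2 (zero_lt_two.trans two_lt_sqrt_two_pi))
    _ < 1 / 2 := by
        rw [mul_one]
        exact one_div_lt_one_div_of_lt zero_lt_two two_lt_sqrt_two_pi

lemma half_lt_g {x : ℝ} (hx : x ∈ Icc (0 : ℝ) 3) : 1 / 2 < g x := by
  obtain ⟨hx0, hx3⟩ := hx
  have : 0 ≤ x * (49 - 6 * x - x ^ 2) := mul_nonneg hx0 (by nlinarith)
  unfold g
  nlinarith

lemma f_lt_g_of_mem_Icc {x : ℝ} (hx : x ∈ Icc (0 : ℝ) 3) : f x < g x :=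
  (f_lt_half hx.1).trans (half_lt_g hx)

lemma g_seven_lt_f_seven : g 7 < f 7 := by
  have : 1 / 3 < 1 / √(2 * π) :=
    one_div_lt_one_div_of_lt (zero_lt_two.trans two_lt_sqrt_two_pi) sqrt_two_pi_lt_three
  unfold f g
  nlinarith

lemma f_sub_g_strictMonoOn : StrictMonoOn (f - g) (Ioi 3) := fun x hx y hy hxy => by
  have hf := f_strictMonoOn.mono (Ioi_subset_Ioi (by norm_num)) hx hy hxy
  have hg := g_strictAntiOn hx hy hxy
  simp only [Pi.sub_apply]
  linarith

lemma exists_mem_Ioo_f_eq_g : ∃ s ∈ Ioo (3 : ℝ) 7, f s = g s := by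
  have hcont : ContinuousOn (f - g) (Icc 3 7) :=
    (continuousOn_f.mono fun x hx => by simp only [mem_Ioi]; linarith [hx.1]).sub
      (by unfold g; fun_prop)
  obtain ⟨s, hs, hfg⟩ := intermediate_value_Ioo (by norm_num) hcont
    ⟨sub_neg.2 (f_lt_g_of_mem_Icc ⟨by norm_num, le_rfl⟩), sub_pos.2 g_seven_lt_f_seven⟩
  exact ⟨s, hs, sub_eq_zero.1 hfg⟩

lemma three_lt_of_f_eq_g {t : ℝ} (ht : 0 < t) (hfg : f t = g t) : 3 < t := by
  by_contra! h
  exact (f_lt_g_of_mem_Icc ⟨ht.le, h⟩).ne hfg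

end GaussianCubicCrossing

open GaussianCubicCrossing

/-- Let `f x = (1/√(2π))·x/(x+1)` and `g x = (1/720)·(414 + 49x − 6x² − x³)`.
Then `g` is strictly decreasing on `(3, ∞)`; there is a unique `s₂ > 0` with
`f s₂ = g s₂`, and for every `x > s₂` one has `g x ≤ f x`. -/
theorem g_decreasing_and_unique_crossing :
    StrictAntiOn (fun x : ℝ => (1 / 720) * (414 + 49 * x - 6 * x ^ 2 - x ^ 3)) (Set.Ioi 3) ∧
    ∃ s₂ : ℝ, (0 < s₂ ∧
        (1 / Real.sqrt (2 * π)) * (s₂ / (s₂ + 1)) =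
          (1 / 720) * (414 + 49 * s₂ - 6 * s₂ ^ 2 - s₂ ^ 3)) ∧
      (∀ t : ℝ, 0 < t →
        (1 / Real.sqrt (2 * π)) * (t / (t + 1)) =
          (1 / 720) * (414 + 49 * t - 6 * t ^ 2 - t ^ 3) → t = s₂) ∧
      (∀ x : ℝ, s₂ < x →
        (1 / 720) * (414 + 49 * x - 6 * x ^ 2 - x ^ 3) ≤
          (1 / Real.sqrt (2 * π)) * (x / (x + 1))) := by
  obtain ⟨s, ⟨hs3, -⟩, hfg⟩ := exists_mem_Ioo_f_eq_g
  refine ⟨g_strictAntiOn, s, ⟨by linarith, hfg⟩, fun t ht (htfg : f t = g t) => ?_, fun x hsx => ?_⟩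
  · have hzero : (f - g) t = (f - g) s := by simp only [Pi.sub_apply, htfg, hfg, sub_self]
    exact f_sub_g_strictMonoOn.injOn (three_lt_of_f_eq_g ht htfg) hs3 hzero
  · have hlt := f_sub_g_strictMonoOn hs3 (hs3.trans hsx) hsx
    simp only [Pi.sub_apply, hfg, sub_self, sub_pos] at hlt
    exact hlt.le
end

section
/- Let c₁, c₂ ∈ ℂ with c₂ ≠ 0 and Re c₁ = 1/2 + |c₂|. Then the matrix A defines a bounded linear map ℓ²(ℕ) → ℓ²(ℕ₀), and its operator norm satisfies ζ(1 + 2|c₂|) ≤ ‖A‖² ≤ ζ(1 + |c₂|). -/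
/-- The matrix of the composition operator `C_φ`, `φ(s) = c₁ + c₂·2^{-s}`, on the
Hardy–Dirichlet space `ℋ²`, with respect to the orthonormal bases `{j^{-s}}_{j ≥ 1}`
(columns, encoded by `j : ℕ` standing for the integer `j+1 ≥ 1`) and
`{(2^i)^{-s}}_{i ≥ 0}` (rows, `i : ℕ`):
`a_{0,1} = 1`, `a_{i,1} = 0` for `i ≥ 1`, and
`a_{i,j} = j^{-c₁}·(−c₂ log j)^i / i!` for columns `j ≥ 2`. -/
noncomputable def compMatrix (c₁ c₂ : ℂ) (i j : ℕ) : ℂ :=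
  if j = 0 then (if i = 0 then 1 else 0)
  else ((j : ℂ) + 1) ^ (-c₁) * (-c₂ * (Real.log ((j : ℝ) + 1) : ℂ)) ^ i / (Nat.factorial i)

open Real Finset Set MeasureTheory intervalIntegral
open scoped Nat

/-!
Write `σ = ‖c₂‖` and `n = j + 1`. Since `Re c₁ = 1/2 + σ`, the entries are
`|a_{i,n}| = √n · g_i(n)` with `g_i(x) = x^{-1-σ} (σ log x)^i / i!` (`logPowTerm`).
Schur's test with the weights `n^{-1/2}` bounds `‖A‖²` by the largest row sum `∑ₙ g_i(n)`,
because every column sum `√n ∑ᵢ g_i(n) = n^{-1/2}` is an exponential series.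
For `i = 0` the row sum is `ζ(1 + σ)`. For `i ≥ 1`, `g_i` is unimodal on `[1, ∞)` with
`∫₁^∞ g_i = 1/σ`, so its row sum is at most `1/σ + max_n g_i(n)`; the peak is at most
`min (1/2) (σ/(1+σ))`, and Bernoulli's inequality together with the integral test bound
`ζ(1 + σ) ≥ 1 + 2^{-σ}/σ` shows that `1/σ` plus this peak is at most `ζ(1 + σ)`.
The lower bound is the squared norm of row `0`, `∑ₙ n^{-1-2σ} = ζ(1 + 2σ)`.
-/

section SchurTest

variable {ι κ : Type*}

theorem sum_sq_sum_mul_le_of_schur {a : ι → κ → ℝ} {q : κ → ℝ} {α : ℝ}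
    (ha : ∀ i j, 0 ≤ a i j) (hq : ∀ j, 0 < q j) (hα : 0 ≤ α)
    (hrow : ∀ i (s : Finset κ), ∑ j ∈ s, a i j * q j ≤ α)
    (hcol : ∀ j (t : Finset ι), ∑ i ∈ t, a i j ≤ q j)
    (b : κ → ℝ) (t : Finset ι) (s : Finset κ) :
    ∑ i ∈ t, (∑ j ∈ s, a i j * b j) ^ 2 ≤ α * ∑ j ∈ s, b j ^ 2 := by
  have hw : ∀ j, 0 ≤ b j ^ 2 / q j := fun j => div_nonneg (sq_nonneg _) (hq j).le
  -- Cauchy–Schwarz, splitting `a i j * b j` as `√(a i j * q j) * √(a i j * b j ^ 2 / q j)`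
  have hrow_sq : ∀ i, (∑ j ∈ s, a i j * b j) ^ 2 ≤ α * ∑ j ∈ s, a i j * (b j ^ 2 / q j) := by
    intro i
    calc (∑ j ∈ s, a i j * b j) ^ 2
        ≤ (∑ j ∈ s, a i j * q j) * ∑ j ∈ s, a i j * (b j ^ 2 / q j) :=
          sum_sq_le_sum_mul_sum_of_sq_le_mul s (fun j _ => mul_nonneg (ha i j) (hq j).le)
            (fun j _ => mul_nonneg (ha i j) (hw j))
            (fun j _ => (by field_simp [(hq j).ne'] : _ = _).le)
      _ ≤ α * ∑ j ∈ s, a i j * (b j ^ 2 / q j) :=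
          mul_le_mul_of_nonneg_right (hrow i s) (sum_nonneg fun j _ => mul_nonneg (ha i j) (hw j))
  calc ∑ i ∈ t, (∑ j ∈ s, a i j * b j) ^ 2
      ≤ ∑ i ∈ t, α * ∑ j ∈ s, a i j * (b j ^ 2 / q j) := sum_le_sum fun i _ => hrow_sq i
    _ = α * ∑ j ∈ s, (∑ i ∈ t, a i j) * (b j ^ 2 / q j) := by
      rw [← mul_sum, sum_comm]; simp only [sum_mul]
    _ ≤ α * ∑ j ∈ s, q j * (b j ^ 2 / q j) := by
      gcongr with j; exacts [hw j, hcol j t]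
    _ = α * ∑ j ∈ s, b j ^ 2 := by
      congr 1; exact sum_congr rfl fun j _ => mul_div_cancel₀ _ (hq j).ne'

variable {𝕜 : Type*} [RCLike 𝕜] {A : ι → κ → 𝕜} {q : κ → ℝ} {α : ℝ}

theorem summable_and_sum_norm_sq_le_of_schur (hq : ∀ j, 0 < q j) (hα : 0 ≤ α)
    (hrow : ∀ i (s : Finset κ), ∑ j ∈ s, ‖A i j‖ * q j ≤ α)
    (hcol : ∀ j (t : Finset ι), ∑ i ∈ t, ‖A i j‖ ≤ q j)
    {x : κ → 𝕜} {X : ℝ} (hx : ∀ s : Finset κ, ∑ j ∈ s, ‖x j‖ ^ 2 ≤ X) :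
    (∀ i, Summable fun j => A i j * x j) ∧
      ∀ t : Finset ι, ∑ i ∈ t, ‖∑' j, A i j * x j‖ ^ 2 ≤ α * X := by
  have hfin : ∀ t s, ∑ i ∈ t, (∑ j ∈ s, ‖A i j * x j‖) ^ 2 ≤ α * X := fun t s => by
    simp only [norm_mul]
    exact (sum_sq_sum_mul_le_of_schur (fun _ _ => norm_nonneg _) hq hα hrow hcol _ t s).trans
      (mul_le_mul_of_nonneg_left (hx s) hα)
  have hsum : ∀ i, Summable fun j => ‖A i j * x j‖ := fun i =>
    summable_of_sum_le (fun _ => norm_nonneg _) fun s =>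
      (le_abs_self _).trans (Real.abs_le_sqrt (by simpa using hfin {i} s))
  refine ⟨fun i => (hsum i).of_norm, fun t => ?_⟩
  have hlim : ∑ i ∈ t, (∑' j, ‖A i j * x j‖) ^ 2 ≤ α * X :=
    le_of_tendsto' (tendsto_finsetSum t fun i _ => (hsum i).hasSum.pow 2) (hfin t)
  exact (sum_le_sum fun i _ =>
    pow_le_pow_left₀ (norm_nonneg _) (norm_tsum_le_tsum_norm (hsum i)) 2).trans hlim

theorem lp.sum_norm_sq_le_norm_sq (x : lp (fun _ : κ => 𝕜) 2) (s : Finset κ) :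
    ∑ j ∈ s, ‖x j‖ ^ 2 ≤ ‖x‖ ^ 2 := by
  simpa using lp.sum_rpow_le_norm_rpow (by norm_num) x s

theorem exists_lp_clm_of_schur (hq : ∀ j, 0 < q j) (hα : 0 ≤ α)
    (hrow : ∀ i (s : Finset κ), ∑ j ∈ s, ‖A i j‖ * q j ≤ α)
    (hcol : ∀ j (t : Finset ι), ∑ i ∈ t, ‖A i j‖ ≤ q j) :
    ∃ T : lp (fun _ : κ => 𝕜) 2 →L[𝕜] lp (fun _ : ι => 𝕜) 2,
      (∀ x i, T x i = ∑' j, A i j * x j) ∧ ‖T‖ ^ 2 ≤ α := by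
  have key := fun x : lp (fun _ : κ => 𝕜) 2 =>
    summable_and_sum_norm_sq_le_of_schur hq hα hrow hcol (lp.sum_norm_sq_le_norm_sq x)
  let L : lp (fun _ : κ => 𝕜) 2 →ₗ[𝕜] lp (fun _ : ι => 𝕜) 2 :=
    { toFun x := ⟨fun i => ∑' j, A i j * x j,
        memℓp_gen' (C := α * ‖x‖ ^ 2) (by simpa using (key x).2)⟩
      map_add' x y := lp.ext <| funext fun i => by
        simp only [lp.coeFn_add, Pi.add_apply, mul_add]
        exact ((key x).1 i).tsum_add ((key y).1 i)
      map_smul' c x := lp.ext <| funext fun i => by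
        simp only [lp.coeFn_smul, Pi.smul_apply, smul_eq_mul, RingHom.id_apply, mul_left_comm _ c]
        exact tsum_mul_left }
  have hL : ∀ x, ‖L x‖ ≤ √α * ‖x‖ := fun x =>
    lp.norm_le_of_forall_sum_le (by norm_num) (by positivity) fun t => by
      simp only [ENNReal.toReal_ofNat, Real.rpow_two, mul_pow, Real.sq_sqrt hα]
      exact (key x).2 t
  refine ⟨L.mkContinuous √α hL, fun x i => rfl, ?_⟩
  calc ‖L.mkContinuous √α hL‖ ^ 2 ≤ √α ^ 2 :=
        pow_le_pow_left₀ (norm_nonneg _) (L.mkContinuous_norm_le (Real.sqrt_nonneg α) hL) 2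
    _ = α := Real.sq_sqrt hα

theorem sum_norm_sq_row_le_opNorm_sq
    (T : lp (fun _ : κ => 𝕜) 2 →L[𝕜] lp (fun _ : ι => 𝕜) 2)
    (hT : ∀ x i, T x i = ∑' j, A i j * x j) (i : ι) (s : Finset κ) :
    ∑ j ∈ s, ‖A i j‖ ^ 2 ≤ ‖T‖ ^ 2 := by
  classical
  set P := ∑ j ∈ s, ‖A i j‖ ^ 2
  let y : lp (fun _ : κ => 𝕜) 2 := ∑ j ∈ s, lp.single 2 j (starRingEnd 𝕜 (A i j))
  have hy : ‖y‖ ^ 2 = P := by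
    simpa [y, P] using lp.norm_sum_single (E := fun _ : κ => 𝕜) (p := 2) (by norm_num)
      (fun j => starRingEnd 𝕜 (A i j)) s
  have hTy : T y i = P := by
    have hy_apply : ∀ j, y j = if j ∈ s then starRingEnd 𝕜 (A i j) else 0 := fun j => by
      simp only [y, lp.coeFn_sum, lp.coeFn_single]
      rw [Finset.sum_apply]
      simp [Pi.single_apply]
    rw [hT, tsum_eq_sum (s := s) fun j hj => by simp [hy_apply, hj]]
    simp [P, hy_apply, RCLike.mul_conj]
  have hP : P ≤ ‖T‖ * ‖y‖ := by
    calc P = ‖T y i‖ := by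
          rw [hTy, RCLike.norm_ofReal, abs_of_nonneg (sum_nonneg fun _ _ => sq_nonneg _)]
      _ ≤ ‖T y‖ := lp.norm_apply_le_norm (by norm_num) _ i
      _ ≤ ‖T‖ * ‖y‖ := T.le_opNorm y
  nlinarith [norm_nonneg T, norm_nonneg y]

end SchurTest

theorem sum_range_le_integral_add_max_of_unimodal {f : ℝ → ℝ} {x₀ p : ℝ} {a b : ℕ}
    (hp : p ∈ Icc (x₀ + a) (x₀ + a + 1)) (hmono : MonotoneOn f (Icc x₀ p))
    (hanti : AntitoneOn f (Icc p (x₀ + a + 1 + b))) :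
    ∑ i ∈ range (a + 2 + b), f (x₀ + i) ≤
      (∫ x in x₀..x₀ + a + 1 + b, f x) + max (f (x₀ + a)) (f (x₀ + a + 1)) := by
  have hx₀p : x₀ ≤ p := le_trans (by simp) hp.1
  have hpb : p ≤ x₀ + a + 1 + b := le_trans hp.2 (by simp)
  have hint : ∀ u v, x₀ ≤ u → u ≤ v → v ≤ x₀ + a + 1 + b → IntervalIntegrable f volume u v := by
    have h := (hmono.mono (uIcc_of_le hx₀p).le).intervalIntegrable (μ := volume) |>.trans
      ((hanti.mono (uIcc_of_le hpb).le).intervalIntegrable)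
    intro u v hu huv hv
    refine h.mono_set ?_
    rw [uIcc_of_le huv, uIcc_of_le (hx₀p.trans hpb)]
    exact Icc_subset_Icc hu hv
  have hleft : ∑ i ∈ range a, f (x₀ + i) ≤ ∫ x in x₀..x₀ + a, f x :=
    MonotoneOn.sum_le_integral (hmono.mono (Icc_subset_Icc le_rfl hp.1))
  have hright :
      ∑ i ∈ range b, f (x₀ + ↑(a + 1 + 1 + i)) ≤ ∫ x in x₀ + a + 1..x₀ + a + 1 + b, f x := by
    convert AntitoneOn.sum_le_integral (hanti.mono (Icc_subset_Icc hp.2 le_rfl)) using 3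
    push_cast; ring
  have hpeak : min (f (x₀ + a)) (f (x₀ + a + 1)) ≤ ∫ x in x₀ + a..x₀ + a + 1, f x := by
    calc min (f (x₀ + a)) (f (x₀ + a + 1))
        = ∫ _ in x₀ + a..x₀ + a + 1, min (f (x₀ + a)) (f (x₀ + a + 1)) := by simp
      _ ≤ ∫ x in x₀ + a..x₀ + a + 1, f x := by
        refine integral_mono_on (by linarith) intervalIntegrable_const
          (hint _ _ (by simp) (by linarith) (by linarith)) fun x hx => ?_
        rcases le_total x p with hxp | hpx
        · exact (min_le_left _ _).trans (hmono ⟨by simp, hp.1⟩ ⟨by linarith [hx.1], hxp⟩ hx.1)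
        · exact (min_le_right _ _).trans
            (hanti ⟨hpx, by linarith [hx.2]⟩ ⟨hp.2, by linarith⟩ hx.2)
  rw [sum_range_add, show a + 2 = a + 1 + 1 from rfl, sum_range_succ, sum_range_succ,
    ← integral_add_adjacent_intervals (b := x₀ + a) (hint _ _ le_rfl (by simp) (by linarith))
      (hint _ _ (by simp) (by linarith) le_rfl),
    ← integral_add_adjacent_intervals (b := x₀ + a + 1)
      (hint _ _ (by simp) (by linarith) (by linarith))
      (hint _ _ (by linarith) (by linarith) le_rfl)]
  push_cast at hright ⊢
  rw [← add_assoc x₀ (a : ℝ) 1]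
  have := min_add_max (f (x₀ + a)) (f (x₀ + a + 1))
  linarith

theorem summable_nat_add_one_rpow_neg {s : ℝ} (hs : 1 < s) :
    Summable fun n : ℕ => ((n : ℝ) + 1) ^ (-s) := by
  simpa using (summable_nat_add_iff 1).2 (Real.summable_nat_rpow.2 (by linarith : -s < -1))

theorem riemannZeta_re_eq_tsum {s : ℝ} (hs : 1 < s) :
    (riemannZeta s).re = ∑' n : ℕ, ((n : ℝ) + 1) ^ (-s) := by
  have hterm : ∀ n : ℕ, 1 / ((n : ℂ) + 1) ^ (s : ℂ) = (((n + 1 : ℝ) ^ (-s) : ℝ) : ℂ) := by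
    intro n
    rw [one_div, ← Complex.cpow_neg, Complex.ofReal_cpow (by positivity)]
    push_cast
    rfl
  rw [zeta_eq_tsum_one_div_nat_add_one_cpow (by simpa using hs), tsum_congr hterm,
    ← Complex.ofReal_tsum, Complex.ofReal_re]

theorem one_add_two_rpow_neg_div_le_riemannZeta {σ : ℝ} (hσ : 0 < σ) :
    1 + 2 ^ (-σ) / σ ≤ (riemannZeta (1 + σ : ℝ)).re := by
  have hanti : AntitoneOn (fun x : ℝ => x ^ (-(1 + σ))) (Ici ((2 : ℕ) : ℝ)) :=
    fun x hx y _ hxy => rpow_le_rpow_of_nonpos (by simp at hx; linarith) hxy (by linarith)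
  have htail := hanti.integral_le_tsum_comp_add 2 (Real.summable_nat_rpow.2 (by linarith))
    fun x hx => rpow_nonneg (by simp at hx; linarith) _
  rw [Nat.cast_ofNat, integral_Ioi_rpow_of_lt (by linarith) two_pos] at htail
  rw [riemannZeta_re_eq_tsum (by linarith),
    (summable_nat_add_one_rpow_neg (by linarith)).tsum_eq_zero_add]
  have he : -(1 + σ) + 1 = -σ := by ring
  rw [he, neg_div_neg_eq] at htail
  push_cast at htail ⊢
  rw [zero_add, one_rpow]
  simp only [add_assoc, one_add_one_eq_two]
  linarith

theorem hasDerivAt_sum_range_pow_div_factorial (k : ℕ) (u : ℝ) :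
    HasDerivAt (fun u : ℝ => ∑ i ∈ range (k + 1), u ^ i / i !) (∑ i ∈ range k, u ^ i / i !)
      u := by
  induction k with
  | zero => simpa using hasDerivAt_const u (1 : ℝ)
  | succ k ih =>
    simp_rw [sum_range_succ _ (k + 1)]
    refine (ih.add ((hasDerivAt_pow (k + 1) u).div_const _)).congr_deriv ?_
    rw [sum_range_succ, Nat.factorial_succ]
    push_cast
    field_simp

noncomputable def logPowTerm (σ : ℝ) (k : ℕ) (x : ℝ) : ℝ :=
  x ^ (-(1 + σ)) * (σ * log x) ^ k / k !

section LogPowTerm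

variable {σ x : ℝ}

lemma logPowTerm_nonneg (hσ : 0 ≤ σ) (k : ℕ) (hx : 1 ≤ x) : 0 ≤ logPowTerm σ k x := by
  have := log_nonneg hx
  unfold logPowTerm
  positivity

@[simp] lemma logPowTerm_zero (σ x : ℝ) : logPowTerm σ 0 x = x ^ (-(1 + σ)) := by
  simp [logPowTerm]

@[simp] lemma logPowTerm_succ_one (σ : ℝ) (k : ℕ) : logPowTerm σ (k + 1) 1 = 0 := by
  simp [logPowTerm]

lemma hasSum_logPowTerm_mul_self (σ : ℝ) (hx : 0 < x) :
    HasSum (fun k => logPowTerm σ k x * x) 1 := by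
  have h := (NormedSpace.expSeries_div_hasSum_exp (σ * log x)).mul_left (x ^ (-(1 + σ)) * x)
  have hval : x ^ (-(1 + σ)) * x * NormedSpace.exp (σ * log x) = 1 := by
    rw [← Real.exp_eq_exp_ℝ, mul_comm σ, ← rpow_def_of_pos hx, ← rpow_add_one hx.ne',
      ← rpow_add hx]
    norm_num
  rw [hval] at h
  have hterm : (fun k => logPowTerm σ k x * x) =
      fun k => x ^ (-(1 + σ)) * x * ((σ * log x) ^ k / k !) :=
    funext fun k => by unfold logPowTerm; ring
  rw [hterm]
  exact h

lemma logPowTerm_le_mul_rpow (hσ : 0 ≤ σ) {τ : ℝ} (hτ : 0 < τ) (k : ℕ) (hx : 1 ≤ x) :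
    logPowTerm σ k x ≤ (σ / τ) ^ k * x ^ (τ - (1 + σ)) := by
  have hx₀ : 0 < x := by linarith
  have hexp : (τ * log x) ^ k / k ! ≤ x ^ τ := by
    rw [rpow_def_of_pos hx₀, mul_comm (log x)]
    exact Real.pow_div_factorial_le_exp _ (by have := log_nonneg hx; positivity) k
  calc logPowTerm σ k x = x ^ (-(1 + σ)) * (σ / τ) ^ k * ((τ * log x) ^ k / k !) := by
        rw [logPowTerm, show σ * log x = σ / τ * (τ * log x) by field_simp, mul_pow]
        ring
    _ ≤ x ^ (-(1 + σ)) * (σ / τ) ^ k * x ^ τ := by gcongr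
    _ = (σ / τ) ^ k * x ^ (τ - (1 + σ)) := by
        rw [sub_eq_neg_add, rpow_add hx₀]; ring

lemma hasDerivAt_logPowTerm_succ (σ : ℝ) (k : ℕ) (hx : 0 < x) :
    HasDerivAt (logPowTerm σ (k + 1))
      (x ^ (-(1 + σ)) / x * (σ * log x) ^ k * ((k + 1) * σ - (1 + σ) * (σ * log x)) / (k + 1)!)
      x := by
  have hpow := (hasDerivAt_rpow_const (p := -(1 + σ)) (Or.inl hx.ne'))
  have hlog := ((hasDerivAt_log hx.ne').const_mul σ).pow (k + 1)
  refine ((hpow.mul hlog).div_const ((k + 1)! : ℝ)).congr_deriv ?_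
  rw [rpow_sub hx, rpow_one, Nat.factorial_succ]
  simp only [Pi.pow_apply]
  push_cast
  field_simp
  ring

lemma monotoneOn_logPowTerm_succ (hσ : 0 ≤ σ) (k : ℕ) :
    MonotoneOn (logPowTerm σ (k + 1)) (Icc 1 (exp ((k + 1) / (1 + σ)))) := by
  have hd : ∀ x ∈ Icc 1 (exp ((k + 1) / (1 + σ))), HasDerivAt (logPowTerm σ (k + 1)) _ x :=
    fun x hx => hasDerivAt_logPowTerm_succ σ k (by linarith [hx.1])
  refine monotoneOn_of_deriv_nonneg (convex_Icc _ _)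
    (fun x hx => (hd x hx).continuousAt.continuousWithinAt)
    (fun x hx => (hd x (interior_subset hx)).differentiableAt.differentiableWithinAt)
    fun x hx => ?_
  rw [interior_Icc] at hx
  have hx₀ : 0 < x := by linarith [hx.1]
  have hlog₀ := log_nonneg hx.1.le
  have hlog : (1 + σ) * log x ≤ k + 1 := by
    rw [← le_div_iff₀' (by linarith)]
    exact (log_le_iff_le_exp hx₀).2 hx.2.le
  rw [(hd x (Ioo_subset_Icc_self hx)).deriv]
  refine div_nonneg (mul_nonneg (mul_nonneg (by positivity) (pow_nonneg (by positivity) k)) ?_)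
    (by positivity)
  nlinarith

lemma antitoneOn_logPowTerm_succ (hσ : 0 ≤ σ) (k : ℕ) :
    AntitoneOn (logPowTerm σ (k + 1)) (Ici (exp ((k + 1) / (1 + σ)))) := by
  have hp : 1 ≤ exp ((k + 1) / (1 + σ)) := one_le_exp (by positivity)
  have hd : ∀ x ∈ Ici (exp ((k + 1) / (1 + σ))), HasDerivAt (logPowTerm σ (k + 1)) _ x :=
    fun x hx => hasDerivAt_logPowTerm_succ σ k (by linarith [mem_Ici.1 hx])
  refine antitoneOn_of_deriv_nonpos (convex_Ici _)
    (fun x hx => (hd x hx).continuousAt.continuousWithinAt)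
    (fun x hx => (hd x (interior_subset hx)).differentiableAt.differentiableWithinAt)
    fun x hx => ?_
  rw [interior_Ici] at hx
  have hx₀ : 0 < x := by linarith [mem_Ioi.1 hx]
  have hlog₀ := log_nonneg (hp.trans (mem_Ioi.1 hx).le)
  have hlog : k + 1 ≤ (1 + σ) * log x := by
    rw [← div_le_iff₀' (by linarith)]
    exact (le_log_iff_exp_le hx₀).2 (mem_Ioi.1 hx).le
  rw [(hd x (Ioi_subset_Ici_self hx)).deriv]
  refine div_nonpos_of_nonpos_of_nonneg (mul_nonpos_of_nonneg_of_nonpos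
    (mul_nonneg (by positivity) (pow_nonneg (by positivity) k)) ?_) (by positivity)
  nlinarith

lemma continuousOn_logPowTerm (σ : ℝ) (k : ℕ) : ContinuousOn (logPowTerm σ k) (Ioi 0) := by
  have hne : ∀ x ∈ Ioi (0 : ℝ), x ≠ 0 := fun x hx => (mem_Ioi.1 hx).ne'
  exact (((continuousOn_id.rpow_const fun x hx => Or.inl (hne x hx)).mul
    ((continuousOn_const.mul (continuousOn_log.mono hne)).pow k))).div_const _

lemma hasDerivAt_logPowTerm_primitive (hσ : σ ≠ 0) (k : ℕ) (hx : 0 < x) :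
    HasDerivAt (fun y => -(y ^ (-σ) * ∑ i ∈ range (k + 1), (σ * log y) ^ i / i !) / σ)
      (logPowTerm σ k x) x := by
  have hpow := hasDerivAt_rpow_const (p := -σ) (Or.inl hx.ne')
  have hsum := (hasDerivAt_sum_range_pow_div_factorial k (σ * log x)).comp x
    ((hasDerivAt_log hx.ne').const_mul σ)
  refine ((hpow.mul hsum).neg.div_const σ).congr_deriv ?_
  simp only [Function.comp_apply]
  rw [sum_range_succ, logPowTerm, show -(1 + σ) = -σ - 1 by ring, rpow_sub hx, rpow_one]
  field_simp
  ring

lemma integral_logPowTerm_le (hσ : 0 < σ) (k : ℕ) {b : ℝ} (hb : 1 ≤ b) :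
    ∫ x in (1 : ℝ)..b, logPowTerm σ k x ≤ 1 / σ := by
  have hpos : ∀ x ∈ uIcc 1 b, 0 < x := fun x hx => by
    rw [uIcc_of_le hb] at hx; linarith [hx.1]
  rw [integral_eq_sub_of_hasDerivAt
    (fun x hx => hasDerivAt_logPowTerm_primitive hσ.ne' k (hpos x hx))
    ((continuousOn_logPowTerm σ k).mono hpos).intervalIntegrable]
  have h1 : ∑ i ∈ range (k + 1), (σ * log 1) ^ i / i ! = 1 := by simp [sum_range_succ']
  have hb' : 0 ≤ b ^ (-σ) * ∑ i ∈ range (k + 1), (σ * log b) ^ i / i ! :=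
    mul_nonneg (by positivity) (sum_nonneg fun i _ => by have := log_nonneg hb; positivity)
  rw [h1, one_rpow, mul_one, neg_div, neg_div, sub_neg_eq_add]
  linarith [div_nonneg hb' hσ.le]

end LogPowTerm

theorem inv_add_logPowTerm_le_riemannZeta {σ : ℝ} (hσ : 0 < σ) (k : ℕ) {n : ℕ} (hn : 1 ≤ n) :
    1 / σ + logPowTerm σ (k + 1) n ≤ (riemannZeta (1 + σ : ℝ)).re := by
  have hn' : (1 : ℝ) ≤ n := by exact_mod_cast hn
  refine le_trans ?_ (one_add_two_rpow_neg_div_le_riemannZeta hσ)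
  rcases le_total σ 1 with hσ1 | hσ1
  · have hterm : logPowTerm σ (k + 1) n ≤ σ / (1 + σ) := by
      refine (logPowTerm_le_mul_rpow hσ.le (τ := 1 + σ) (by linarith) (k + 1) hn').trans ?_
      rw [sub_self, rpow_zero, mul_one]
      exact pow_le_of_le_one (by positivity) (div_le_one_of_le₀ (by linarith) (by linarith))
        (Nat.succ_ne_zero k)
    have hbern : (2 : ℝ) ^ σ ≤ 1 + σ := by
      simpa [one_add_one_eq_two] using
        rpow_one_add_le_one_add_mul_self (s := 1) (by norm_num) hσ.le hσ1
    calc 1 / σ + logPowTerm σ (k + 1) n ≤ 1 + (1 + σ)⁻¹ / σ := by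
          have : 1 / σ + σ / (1 + σ) = 1 + (1 + σ)⁻¹ / σ := by field_simp; ring
          linarith
      _ ≤ 1 + 2 ^ (-σ) / σ := by
          rw [rpow_neg zero_le_two]
          gcongr
  · have hterm : logPowTerm σ (k + 1) n ≤ 1 / 2 := by
      rcases hn.eq_or_lt with rfl | hn2
      · simp
      refine (logPowTerm_le_mul_rpow hσ.le hσ (k + 1) hn').trans ?_
      have hn2' : (2 : ℝ) ≤ n := by exact_mod_cast hn2
      rw [div_self hσ.ne', one_pow, one_mul, show σ - (1 + σ) = -1 by ring, rpow_neg_one]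
      rw [one_div]
      exact inv_anti₀ two_pos hn2'
    have hbern : 1 - σ / 2 ≤ 2 ^ (-σ) := by
      have := one_add_mul_self_le_rpow_one_add (s := -1 / 2) (by norm_num) hσ1
      rw [rpow_neg zero_le_two, ← inv_rpow zero_le_two]
      norm_num at this ⊢
      linarith
    have : 1 / σ - 1 / 2 ≤ 2 ^ (-σ) / σ := by
      rw [show 1 / σ - 1 / 2 = (1 - σ / 2) / σ by field_simp]
      gcongr
    linarith

theorem sum_logPowTerm_le_riemannZeta {σ : ℝ} (hσ : 0 < σ) (k : ℕ) (s : Finset ℕ) :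
    ∑ n ∈ s, logPowTerm σ k (n + 1) ≤ (riemannZeta (1 + σ : ℝ)).re := by
  rcases k with _ | k
  · rw [riemannZeta_re_eq_tsum (by linarith)]
    simpa using (summable_nat_add_one_rpow_neg (by linarith : 1 < 1 + σ)).sum_le_tsum s
      fun n _ => by positivity
  set p := exp ((k + 1) / (1 + σ))
  set a := ⌊p - 1⌋₊
  have hp₁ : 1 ≤ p := one_le_exp (by positivity)
  have hp : p ∈ Icc (1 + (a : ℝ)) (1 + a + 1) :=
    ⟨by linarith [Nat.floor_le (sub_nonneg.2 hp₁)], by linarith [Nat.lt_floor_add_one (p - 1)]⟩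
  obtain ⟨b, hsb⟩ : ∃ b, s ⊆ range (a + 2 + b) :=
    ⟨s.sup id, fun n hn => mem_range.2 (by have := le_sup (f := id) hn; simp at this; omega)⟩
  have hpeak : ∀ n : ℕ, 1 ≤ n → logPowTerm σ (k + 1) n ≤ (riemannZeta (1 + σ : ℝ)).re - 1 / σ :=
    fun n hn => le_sub_iff_add_le'.2 (inv_add_logPowTerm_le_riemannZeta hσ k hn)
  calc ∑ n ∈ s, logPowTerm σ (k + 1) (n + 1)
      ≤ ∑ n ∈ range (a + 2 + b), logPowTerm σ (k + 1) (1 + n) := by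
        simp only [add_comm _ (1 : ℝ)]
        exact sum_le_sum_of_subset_of_nonneg hsb fun n _ _ =>
          logPowTerm_nonneg hσ.le _ (by linarith [n.cast_nonneg (α := ℝ)])
    _ ≤ (∫ x in 1..1 + a + 1 + b, logPowTerm σ (k + 1) x) +
          max (logPowTerm σ (k + 1) (1 + a)) (logPowTerm σ (k + 1) (1 + a + 1)) :=
        sum_range_le_integral_add_max_of_unimodal hp (monotoneOn_logPowTerm_succ hσ.le k)
          ((antitoneOn_logPowTerm_succ hσ.le k).mono Icc_subset_Ici_self)
    _ ≤ 1 / σ + ((riemannZeta (1 + σ : ℝ)).re - 1 / σ) := by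
        gcongr
        · exact integral_logPowTerm_le hσ _
            (by linarith [a.cast_nonneg (α := ℝ), b.cast_nonneg (α := ℝ)])
        · refine max_le ?_ ?_
          · exact_mod_cast hpeak (1 + a) (by omega)
          · exact_mod_cast hpeak (1 + a + 1) (by omega)
    _ = (riemannZeta (1 + σ : ℝ)).re := by ring

theorem norm_compMatrix {c₁ c₂ : ℂ} (hre : c₁.re = 1 / 2 + ‖c₂‖) (i j : ℕ) :
    ‖compMatrix c₁ c₂ i j‖ = logPowTerm ‖c₂‖ i (j + 1) * √(j + 1) := by
  rcases j.eq_zero_or_pos with rfl | hj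
  · rcases i with _ | i <;> simp [compMatrix]
  have hj₁ : (1 : ℝ) ≤ j + 1 := by linarith [j.cast_nonneg (α := ℝ)]
  have hcast : ((j : ℂ) + 1) = ((j + 1 : ℝ) : ℂ) := by push_cast; rfl
  rw [compMatrix, if_neg hj.ne', norm_div, norm_mul, norm_pow, hcast,
    Complex.norm_cpow_eq_rpow_re_of_pos (by linarith), norm_mul, norm_neg, Complex.norm_real,
    Real.norm_of_nonneg (log_nonneg hj₁), Complex.norm_natCast, Complex.neg_re, hre,
    logPowTerm, sqrt_eq_rpow, show -(1 / 2 + ‖c₂‖) = -(1 + ‖c₂‖) + 1 / 2 by ring,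
    rpow_add (by linarith)]
  ring

theorem sq_norm_compMatrix_zero {c₁ c₂ : ℂ} (hre : c₁.re = 1 / 2 + ‖c₂‖) (j : ℕ) :
    ‖compMatrix c₁ c₂ 0 j‖ ^ 2 = ((j : ℝ) + 1) ^ (-(1 + 2 * ‖c₂‖)) := by
  have hj : (0 : ℝ) < j + 1 := by positivity
  rw [norm_compMatrix hre, logPowTerm_zero, mul_pow, sq_sqrt hj.le, ← rpow_natCast,
    ← rpow_mul hj.le, ← rpow_add_one hj.ne']
  norm_num
  ring_nf

theorem sum_norm_compMatrix_mul_le {c₁ c₂ : ℂ} (hc₂ : c₂ ≠ 0) (hre : c₁.re = 1 / 2 + ‖c₂‖)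
    (i : ℕ) (s : Finset ℕ) :
    ∑ j ∈ s, ‖compMatrix c₁ c₂ i j‖ * (√(j + 1))⁻¹ ≤ (riemannZeta (1 + ‖c₂‖ : ℝ)).re := by
  have hj : ∀ j : ℕ, √((j : ℝ) + 1) ≠ 0 := fun j => (sqrt_pos.2 (by positivity)).ne'
  simpa [norm_compMatrix hre, mul_assoc, hj] using
    sum_logPowTerm_le_riemannZeta (norm_pos_iff.2 hc₂) i s

theorem sum_norm_compMatrix_le {c₁ c₂ : ℂ} (hre : c₁.re = 1 / 2 + ‖c₂‖) (j : ℕ)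
    (t : Finset ℕ) : ∑ i ∈ t, ‖compMatrix c₁ c₂ i j‖ ≤ (√(j + 1))⁻¹ := by
  have hj : (0 : ℝ) < j + 1 := by positivity
  have hsum := sum_le_hasSum t (fun i _ => mul_nonneg (logPowTerm_nonneg (norm_nonneg c₂) i
    (by linarith [j.cast_nonneg (α := ℝ)])) hj.le) (hasSum_logPowTerm_mul_self ‖c₂‖ hj)
  rw [← sum_mul] at hsum
  nth_rw 2 [← mul_self_sqrt hj.le] at hsum
  rw [← mul_assoc, ← le_div_iff₀ (sqrt_pos.2 hj), one_div] at hsum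
  simpa [norm_compMatrix hre, ← sum_mul] using hsum

/-- Let `φ(s) = c₁ + c₂ 2^{-s}` with `c₂ ≠ 0` and `Re c₁ = 1/2 + |c₂|`.  Then the
matrix of `C_φ` defines a bounded linear map `ℓ²(ℕ) → ℓ²(ℕ₀)` whose operator norm
satisfies `ζ(1 + 2|c₂|) ≤ ‖C_φ‖² ≤ ζ(1 + |c₂|)`. -/
theorem norm_estimate_comp_operator_boundary (c₁ c₂ : ℂ) (hc₂ : c₂ ≠ 0)
    (hre : c₁.re = 1 / 2 + ‖c₂‖) :
    ∃ T : lp (fun _ : ℕ => ℂ) 2 →L[ℂ] lp (fun _ : ℕ => ℂ) 2,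
      (∀ (x : lp (fun _ : ℕ => ℂ) 2) (i : ℕ), T x i = ∑' j : ℕ, compMatrix c₁ c₂ i j * x j) ∧
      (riemannZeta ((1 + 2 * ‖c₂‖ : ℝ) : ℂ)).re ≤ ‖T‖ ^ 2 ∧
      ‖T‖ ^ 2 ≤ (riemannZeta ((1 + ‖c₂‖ : ℝ) : ℂ)).re := by
  have hσ : 0 < ‖c₂‖ := norm_pos_iff.2 hc₂
  have hζ : 0 ≤ (riemannZeta ((1 + ‖c₂‖ : ℝ) : ℂ)).re :=
    (by positivity : (0 : ℝ) ≤ 1 + 2 ^ (-‖c₂‖) / ‖c₂‖).trans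
      (one_add_two_rpow_neg_div_le_riemannZeta hσ)
  obtain ⟨T, hT, hTζ⟩ := exists_lp_clm_of_schur (fun j => inv_pos.2 (sqrt_pos.2 (by positivity)))
    hζ (sum_norm_compMatrix_mul_le hc₂ hre) (sum_norm_compMatrix_le hre)
  refine ⟨T, hT, ?_, hTζ⟩
  rw [riemannZeta_re_eq_tsum (by linarith)]
  refine Real.tsum_le_of_sum_le (fun j => by positivity) fun s => ?_
  simpa [sq_norm_compMatrix_zero hre] using sum_norm_sq_row_le_opNorm_sq T hT 0 s
end
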